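/- Let n be a positive integer and let G be a connected graph with at most 4n−2 edges such that G → (nK₂, C₃). Suppose that for every positive integer k, every connected graph G′ with either fewer vertices than G, or the same number of vertices and fewer edges than G, satisfies G′ ↛ (kK₂, C₃) whenever G′ has at most 4k−2 edges. Then every edge of G is contained in at least one triangle of G. -/

import Mathlib

open SimpleGraph

/-- `G` contains a copy of `H`, i.e. there is an injective graph homomorphism from `H` to `G`. -/
def ContainsCopy {V W : Type*} (G : SimpleGraph V) (H : SimpleGraph W) : Prop :=
  ∃ f : H →g G, Function.Injective f

/-- `G` arrows `(G₁, G₂)`: for every red/blue colouring of the edges of `G`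
(given by a subgraph `R ≤ G` of red edges, the blue edges being `G \ R`),
there is a red copy of `G₁` or a blue copy of `G₂`. -/
def Arrows {V V₁ V₂ : Type*} (G : SimpleGraph V) (G₁ : SimpleGraph V₁) (G₂ : SimpleGraph V₂) :
    Prop :=
  ∀ R : SimpleGraph V, R ≤ G → ContainsCopy R G₁ ∨ ContainsCopy (G \ R) G₂

/-- The matching `nK₂` with `n` edges. -/
def Matching (n : ℕ) : SimpleGraph (Fin n × Fin 2) where
  Adj a b := a.1 = b.1 ∧ a.2 ≠ b.2
  symm := by constructor; intro a b h; exact ⟨h.1.symm, h.2.symm⟩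
  loopless := by constructor; intro a h; exact h.2 rfl

/-- `n` disjoint copies of the graph `H`. -/
def Copies (n : ℕ) {W : Type*} (H : SimpleGraph W) : SimpleGraph (Fin n × W) where
  Adj a b := a.1 = b.1 ∧ H.Adj a.2 b.2
  symm := by constructor; intro a b h; exact ⟨h.1.symm, h.2.symm⟩
  loopless := by constructor; intro a h; exact absurd h.2 H.irrefl

/-- Disjoint union of two graphs. -/
def DisjUnion {V W : Type*} (G : SimpleGraph V) (H : SimpleGraph W) : SimpleGraph (V ⊕ W) where
  Adj a b :=
    match a, b with
    | Sum.inl x, Sum.inl y => G.Adj x y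
    | Sum.inr x, Sum.inr y => H.Adj x y
    | _, _ => False
  symm := by
    constructor
    rintro (x | x) (y | y) h
    · exact G.adj_symm h
    · exact h.elim
    · exact h.elim
    · exact H.adj_symm h
  loopless := by
    constructor
    rintro (x | x) h
    · exact absurd h G.irrefl
    · exact absurd h H.irrefl

/-!
Suppose the edge `vw` lies in no triangle and let `G'` be `G` with `vw` deleted. A blue triangle
never uses `vw`, so `G' → (nK₂, C₃)`; if `G'` is connected this contradicts the minimality of `G`.
Otherwise `vw` is a bridge and `G'` splits into the components `A ∋ v` and `B ∋ w`. Take `a`, `b`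
maximal with `A → (aK₂, C₃)` and `B → (bK₂, C₃)`. Gluing colourings witnessing
`A ↛ ((a+1)K₂, C₃)` and `B ↛ ((b+1)K₂, C₃)` shows `n ≤ a + b`, and then
`e(A) + e(B) ≤ e(G) - 1 ≤ 4(a + b) - 3` forces `e(A) ≤ 4a - 2` or `e(B) ≤ 4b - 2`, against
minimality once more.
-/

open Finset

variable {V W : Type*}

lemma containsCopy_iff_isContained {G : SimpleGraph V} {H : SimpleGraph W} :
    ContainsCopy G H ↔ H ⊑ G :=
  ⟨fun ⟨f, hf⟩ ↦ ⟨⟨f, hf⟩⟩, fun ⟨f⟩ ↦ ⟨f.toHom, f.injective⟩⟩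

lemma containsCopy_cycleGraph_three_iff {G : SimpleGraph V} :
    ContainsCopy G (cycleGraph 3) ↔ ∃ x y z, G.Adj x y ∧ G.Adj x z ∧ G.Adj y z := by
  rw [containsCopy_iff_isContained, cycleGraph_three_eq_top,
    ← not_cliqueFree_iff_top_isContained]
  classical
  simp [CliqueFree, is3Clique_iff]

lemma isContained_induce_of_forall_mem {G : SimpleGraph V} {H : SimpleGraph W} {S : Set V}
    (f : Copy H G) (hf : ∀ x, f x ∈ S) : H ⊑ G.induce S :=
  ⟨⟨⟨fun x ↦ ⟨f x, hf x⟩, f.toHom.map_rel⟩, fun _ _ h ↦ f.injective (congrArg Subtype.val h)⟩⟩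

def Matching.copyOfEmbedding {m n : ℕ} (g : Fin m ↪ Fin n) : Copy (Matching m) (Matching n) :=
  ⟨⟨Prod.map g id, fun h ↦ ⟨congrArg g h.1, h.2⟩⟩, g.injective.prodMap Function.injective_id⟩

lemma Matching.isContained_induce_of_le_card {G : SimpleGraph V} {S : Set V} {m n : ℕ}
    (f : Copy (Matching n) G) (hS : ∀ i t, f (i, t) ∈ S ↔ f (i, 0) ∈ S)
    {I : Finset (Fin n)} (hI : ∀ i ∈ I, f (i, 0) ∈ S) (hm : m ≤ #I) :
    Matching m ⊑ G.induce S := by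
  refine isContained_induce_of_forall_mem
    (f.comp (Matching.copyOfEmbedding (I.orderEmbOfCardLe hm).toEmbedding)) ?_
  rintro ⟨j, t⟩
  exact (hS _ t).2 (hI _ (I.orderEmbOfCardLe_mem hm j))

lemma Matching.isContained_induce_or_induce_compl {G : SimpleGraph V} {S : Set V}
    (hS : ∀ ⦃x y⦄, G.Adj x y → (x ∈ S ↔ y ∈ S)) {a b n : ℕ} (hn : a + b < n)
    (h : Matching n ⊑ G) : Matching (a + 1) ⊑ G.induce S ∨ Matching (b + 1) ⊑ G.induce Sᶜ := by
  classical
  obtain ⟨f⟩ := h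
  have hf : ∀ i t, f (i, t) ∈ S ↔ f (i, 0) ∈ S := by
    intro i t
    fin_cases t
    · rfl
    · have hadj : (Matching n).Adj (i, 0) (i, 1) := ⟨rfl, zero_ne_one⟩
      exact (hS (f.toHom.map_rel hadj)).symm
  have hcard := card_filter_add_card_filter_not (s := univ) fun i ↦ f (i, 0) ∈ S
  rw [card_univ, Fintype.card_fin] at hcard
  by_cases ha : a + 1 ≤ #{i | f (i, 0) ∈ S}
  · exact .inl (Matching.isContained_induce_of_le_card f hf (by simp) ha)
  · exact .inr (Matching.isContained_induce_of_le_card f (fun i t ↦ not_congr (hf i t))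
      (I := {i | f (i, 0) ∉ S}) (by simp) (by omega))

lemma containsCopy_cycleGraph_three_induce_or_induce_compl {G : SimpleGraph V} {S : Set V}
    (hS : ∀ ⦃x y⦄, G.Adj x y → (x ∈ S ↔ y ∈ S)) (h : ContainsCopy G (cycleGraph 3)) :
    ContainsCopy (G.induce S) (cycleGraph 3) ∨ ContainsCopy (G.induce Sᶜ) (cycleGraph 3) := by
  obtain ⟨x, y, z, hxy, hxz, hyz⟩ := containsCopy_cycleGraph_three_iff.1 h
  simp only [containsCopy_cycleGraph_three_iff]
  by_cases hx : x ∈ S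
  · exact .inl ⟨⟨x, hx⟩, ⟨y, (hS hxy).1 hx⟩, ⟨z, (hS hxz).1 hx⟩, hxy, hxz, hyz⟩
  · exact .inr ⟨⟨x, hx⟩, ⟨y, mt (hS hxy).2 hx⟩, ⟨z, mt (hS hxz).2 hx⟩, hxy, hxz, hyz⟩

lemma induce_map_subtype_sup_map_subtype {S T : Set V} (hST : Disjoint S T) (A : SimpleGraph S)
    (B : SimpleGraph T) :
    (A.map (Function.Embedding.subtype (· ∈ S)) ⊔
      B.map (Function.Embedding.subtype (· ∈ T))).induce S = A := by
  ext ⟨x, hx⟩ ⟨y, hy⟩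
  constructor
  · rintro (⟨-, u, v, h, rfl, rfl⟩ | ⟨-, u, -, -, rfl, -⟩)
    · exact h
    · exact (hST.ne_of_mem hx u.2 rfl).elim
  · exact fun h ↦ .inl ⟨fun e ↦ h.ne (Subtype.ext e), _, _, h, rfl, rfl⟩

lemma not_arrows_of_not_arrows_induce {H : SimpleGraph V} {S : Set V}
    (hS : ∀ ⦃x y⦄, H.Adj x y → (x ∈ S ↔ y ∈ S)) {a b n : ℕ} (hn : a + b < n)
    (ha : ¬ Arrows (H.induce S) (Matching (a + 1)) (cycleGraph 3))
    (hb : ¬ Arrows (H.induce Sᶜ) (Matching (b + 1)) (cycleGraph 3)) :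
    ¬ Arrows H (Matching n) (cycleGraph 3) := by
  simp only [Arrows, not_forall, not_or] at ha hb
  obtain ⟨RS, hRS, hRS_red, hRS_blue⟩ := ha
  obtain ⟨RT, hRT, hRT_red, hRT_blue⟩ := hb
  let R := RS.map (Function.Embedding.subtype (· ∈ S)) ⊔
    RT.map (Function.Embedding.subtype (· ∈ Sᶜ))
  have hR : R ≤ H :=
    sup_le ((map_le_iff_le_comap _ _ _).2 hRS) ((map_le_iff_le_comap _ _ _).2 hRT)
  have hRS_eq : R.induce S = RS := induce_map_subtype_sup_map_subtype disjoint_compl_right RS RT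
  have hRT_eq : R.induce Sᶜ = RT := by
    have := induce_map_subtype_sup_map_subtype disjoint_compl_left RT RS
    rwa [sup_comm] at this
  intro harrow
  rcases harrow R hR with hred | hblue
  · rcases Matching.isContained_induce_or_induce_compl (fun x y h ↦ hS (hR h)) hn
      (containsCopy_iff_isContained.1 hred) with h | h
    · exact hRS_red (containsCopy_iff_isContained.2 (hRS_eq ▸ h))
    · exact hRT_red (containsCopy_iff_isContained.2 (hRT_eq ▸ h))
  · rcases containsCopy_cycleGraph_three_induce_or_induce_compl
      (fun _ _ h ↦ hS (sdiff_le (a := H) h)) hblue with h | h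
    · exact hRS_blue (hRS_eq ▸ h)
    · exact hRT_blue (hRT_eq ▸ h)

lemma Arrows.deleteEdges_of_forall_not_adj {G : SimpleGraph V} {K : SimpleGraph W} {v w : V}
    (h : Arrows G K (cycleGraph 3)) (hvw : ∀ u, G.Adj v u → ¬ G.Adj w u) :
    Arrows (G.deleteEdges {s(v, w)}) K (cycleGraph 3) := by
  have hne : ∀ ⦃x y z⦄, G.Adj x z → G.Adj y z → s(x, y) ≠ s(v, w) := by
    rintro x y z hxz hyz hxy
    rcases Sym2.eq_iff.1 hxy with ⟨rfl, rfl⟩ | ⟨rfl, rfl⟩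
    exacts [hvw z hxz hyz, hvw z hyz hxz]
  intro R hR
  refine (h R (hR.trans (deleteEdges_le _))).imp id fun hblue ↦ ?_
  obtain ⟨x, y, z, hxy, hxz, hyz⟩ := containsCopy_cycleGraph_three_iff.1 hblue
  refine containsCopy_cycleGraph_three_iff.2 ⟨x, y, z, ?_, ?_, ?_⟩ <;>
    simp only [sdiff_adj, deleteEdges_adj, Set.mem_singleton_iff] at *
  exacts [⟨⟨hxy.1, hne hxz.1 hyz.1⟩, hxy.2⟩, ⟨⟨hxz.1, hne hxy.1 hyz.1.symm⟩, hxz.2⟩,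
    ⟨⟨hyz.1, hne hxy.1.symm hxz.1.symm⟩, hyz.2⟩]

lemma exists_arrows_matching_and_not_arrows_succ [Finite V] (G : SimpleGraph V) :
    ∃ a, Arrows G (Matching a) (cycleGraph 3) ∧ ¬ Arrows G (Matching (a + 1)) (cycleGraph 3) := by
  by_contra! h
  have hall : ∀ a, Arrows G (Matching a) (cycleGraph 3) := by
    intro a
    induction a with
    | zero => exact fun R _ ↦ .inl (containsCopy_iff_isContained.2 .of_isEmpty)
    | succ a ih => exact h a ih
  rcases hall (Nat.card V + 1) G le_rfl with ⟨f, hf⟩ | hblue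
  · have := Nat.card_le_card_of_injective f hf
    rw [Nat.card_prod, Nat.card_fin, Nat.card_fin] at this
    omega
  · obtain ⟨x, y, -, hxy, -⟩ := containsCopy_cycleGraph_three_iff.1 hblue
    simp at hxy

lemma reachable_or_reachable_deleteEdges {G : SimpleGraph V} (hG : G.Preconnected) (v w u : V) :
    (G.deleteEdges {s(v, w)}).Reachable v u ∨ (G.deleteEdges {s(v, w)}).Reachable w u := by
  set G' := G.deleteEdges {s(v, w)}
  suffices ∀ {x} (p : G.Walk x u), G'.Reachable v x ∨ G'.Reachable w x →
      G'.Reachable v u ∨ G'.Reachable w u from this (hG v u).some (.inl .rfl)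
  intro x p
  induction p with
  | nil => exact id
  | @cons x y u hxy p ih =>
    refine fun hx ↦ ih ?_
    by_cases he : s(x, y) = s(v, w)
    · rcases Sym2.eq_iff.1 he with ⟨-, rfl⟩ | ⟨-, rfl⟩
      exacts [.inr .rfl, .inl .rfl]
    · have hxy' : G'.Adj x y := by simp [G', hxy, he]
      exact hx.imp (·.trans hxy'.reachable) (·.trans hxy'.reachable)

lemma compl_supp_eq_supp_of_not_connected_deleteEdges {G : SimpleGraph V} (hG : G.Preconnected)
    {v w : V} (h : ¬ (G.deleteEdges {s(v, w)}).Connected) :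
    ((G.deleteEdges {s(v, w)}).connectedComponentMk v).suppᶜ =
      ((G.deleteEdges {s(v, w)}).connectedComponentMk w).supp := by
  ext u
  simp only [Set.mem_compl_iff, ConnectedComponent.mem_supp_iff, ConnectedComponent.eq]
  constructor
  · exact fun hv ↦ ((reachable_or_reachable_deleteEdges hG v w u).resolve_left (hv ·.symm)).symm
  · refine fun hw hv ↦ h ((connected_iff_exists_forall_reachable _).2 ⟨v, fun x ↦ ?_⟩)
    exact (reachable_or_reachable_deleteEdges hG v w x).elim id (hv.symm.trans hw |>.trans)

lemma ncard_edgeSet_induce_add_ncard_edgeSet_induce_compl_le [Finite V] (G : SimpleGraph V)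
    (S : Set V) : (G.induce S).edgeSet.ncard + (G.induce Sᶜ).edgeSet.ncard ≤ G.edgeSet.ncard := by
  simp only [← Nat.card_coe_set_eq, ← Nat.card_sum]
  refine Nat.card_le_card_of_injective _ <| (Copy.induce G S).mapEdgeSet.injective.sumElim
    (Copy.induce G Sᶜ).mapEdgeSet.injective ?_
  rintro ⟨e, he⟩ ⟨e', he'⟩ h
  induction e using Sym2.ind with | _ x y
  induction e' using Sym2.ind with | _ x' y'
  simp only [Copy.mapEdgeSet, Function.Embedding.coeFn_mk, Hom.mapEdgeSet, Copy.toHom_apply,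
    Sym2.map_mk, Subtype.mk.injEq, Sym2.eq, Sym2.rel_iff', Prod.mk.injEq, Prod.swap_prod_mk] at h
  rcases h with ⟨h, -⟩ | ⟨h, -⟩
  · exact x'.2 ((show (x : V) = x' from h) ▸ x.2)
  · exact y'.2 ((show (x : V) = y' from h) ▸ x.2)

/-- Under the minimality hypotheses, every edge of `G` is contained in at
least one triangle. -/
theorem every_edge_in_triangle (n : ℕ) (hn : 0 < n) (V : Type) [Finite V]
    (G : SimpleGraph V) (hconn : G.Connected) (hE : G.edgeSet.ncard ≤ 4 * n - 2)
    (harrow : Arrows G (Matching n) (cycleGraph 3))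
    (hmin : ∀ k : ℕ, 0 < k → ∀ (W : Type), Finite W → ∀ H : SimpleGraph W,
      H.Connected →
      (Nat.card W < Nat.card V ∨
        (Nat.card W = Nat.card V ∧ H.edgeSet.ncard < G.edgeSet.ncard)) →
      H.edgeSet.ncard ≤ 4 * k - 2 →
      ¬ Arrows H (Matching k) (cycleGraph 3)) :
    ∀ v w : V, G.Adj v w → ∃ u : V, G.Adj v u ∧ G.Adj w u := by
  intro v w hvw
  by_contra! hno
  set G' := G.deleteEdges {s(v, w)}
  have harrow' : Arrows G' (Matching n) (cycleGraph 3) := harrow.deleteEdges_of_forall_not_adj hno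
  have hE' : G'.edgeSet.ncard + 1 = G.edgeSet.ncard := by
    rw [edgeSet_deleteEdges]
    exact Set.ncard_sdiff_singleton_add_one hvw (Set.toFinite _)
  by_cases hG' : G'.Connected
  · exact hmin n hn V ‹_› G' hG' (.inr ⟨rfl, by omega⟩) (by omega) harrow'
  set S := (G'.connectedComponentMk v).supp
  have hSc : Sᶜ = (G'.connectedComponentMk w).supp :=
    compl_supp_eq_supp_of_not_connected_deleteEdges hconn.preconnected hG'
  obtain ⟨a, hA, hA_succ⟩ := exists_arrows_matching_and_not_arrows_succ (G'.induce S)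
  obtain ⟨b, hB, hB_succ⟩ := exists_arrows_matching_and_not_arrows_succ (G'.induce Sᶜ)
  have hab : n ≤ a + b := by
    by_contra! h
    exact not_arrows_of_not_arrows_induce
      (fun _ _ ↦ (G'.connectedComponentMk v).mem_supp_congr_adj) h hA_succ hB_succ harrow'
  have hS_lt : Nat.card S < Nat.card V :=
    Finite.card_subtype_lt (x := w) (by rw [← Set.mem_compl_iff, hSc]; rfl)
  have hT_lt : Nat.card ↥Sᶜ < Nat.card V :=
    Finite.card_subtype_lt (x := v) (by simp [S])
  have hS_conn : (G'.induce S).Connected := ConnectedComponent.connected_toSimpleGraph _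
  have hT_conn : (G'.induce Sᶜ).Connected := hSc ▸ ConnectedComponent.connected_toSimpleGraph _
  have hE_split := ncard_edgeSet_induce_add_ncard_edgeSet_induce_compl_le G' S
  by_cases ha : 0 < a ∧ (G'.induce S).edgeSet.ncard ≤ 4 * a - 2
  · exact hmin a ha.1 S inferInstance _ hS_conn (.inl hS_lt) ha.2 hA
  · exact hmin b (by omega) _ inferInstance _ hT_conn (.inl hT_lt) (by omega) hB
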